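/- Let f : ℝⁿ → ℝ be differentiable, μ-strongly convex, and L-smooth with minimizer x* and κ = L/μ. Suppose x, x⁺ ∈ ℝⁿ satisfy ⟨∇f(x⁺), x⁺ - x⟩ = 0, ⟨∇f(x⁺), ∇f(x)⟩ = 0, and f(x⁺) ≤ f(x). Then f(x⁺) - f(x*) ≤ ((κ-1)/(κ+1)) (f(x) - f(x*)). -/

import Mathlib

/-!
Convexity and `L`-smoothness give `‖∇f y - ∇f z‖² ≤ 2L (f y - f z - ⟪∇f z, y - z⟫)`.
At `z = x⁺`, `y = x` the orthogonality hypotheses remove the inner product and split the left side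
into `‖∇f x‖² + ‖∇f x⁺‖²`, so `f x - f x⁺ ≥ (‖∇f x‖² + ‖∇f x⁺‖²) / (2L)`. The Polyak–Łojasiewicz
inequality at `x` and `x⁺` bounds this below by `μ ((f x - f x*) + (f x⁺ - f x*)) / L`, which
rearranges to the rate `(L - μ) / (L + μ) = (κ - 1) / (κ + 1)`.
-/

open RealInnerProductSpace

section LipschitzGradient

variable {E : Type*} [NormedAddCommGroup E] [InnerProductSpace ℝ E] {f : E → ℝ} {g : E → E}
  {L μ : ℝ}

theorem polyakLojasiewicz_of_strongConvex (hμ : 0 < μ)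
    (hsc : ∀ x y, f y ≥ f x + ⟪g x, y - x⟫ + μ / 2 * ‖y - x‖ ^ 2) (z y : E) :
    2 * μ * (f z - f y) ≤ ‖g z‖ ^ 2 := by
  have hinner : -(‖g z‖ * ‖y - z‖) ≤ ⟪g z, y - z⟫ := (abs_le.1 (abs_real_inner_le_norm _ _)).1
  nlinarith [hsc z y, sq_nonneg (‖g z‖ - μ * ‖y - z‖)]

variable [CompleteSpace E]

theorem HasGradientAt.hasDerivAt_comp_add_smul {g' v u : E} {t : ℝ}
    (hf : HasGradientAt f g' (v + t • u)) :
    HasDerivAt (fun s : ℝ => f (v + s • u)) ⟪g', u⟫ t := by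
  have hline : HasDerivAt (fun s : ℝ => v + s • u) u t := by
    simpa using ((hasDerivAt_id t).smul_const u).const_add v
  have := hf.hasFDerivAt.comp_hasDerivAt t hline
  simp only [InnerProductSpace.toDual_apply_apply] at this
  exact this

theorem le_add_inner_add_of_lipschitz_gradient (hgrad : ∀ x, HasGradientAt f (g x) x)
    (hsmooth : ∀ x y, ‖g x - g y‖ ≤ L * ‖x - y‖) (v w : E) :
    f w ≤ f v + ⟪g v, w - v⟫ + L / 2 * ‖w - v‖ ^ 2 := by
  set u := w - v
  set q : ℝ → ℝ := fun t => f (v + t • u) - t * ⟪g v, u⟫ - L / 2 * ‖u‖ ^ 2 * t ^ 2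
  have hq : ∀ t, HasDerivAt q (⟪g (v + t • u) - g v, u⟫ - L * ‖u‖ ^ 2 * t) t := by
    intro t
    refine ((((hgrad (v + t • u)).hasDerivAt_comp_add_smul).sub
      ((hasDerivAt_id t).mul_const ⟪g v, u⟫)).sub
      ((hasDerivAt_pow 2 t).const_mul (L / 2 * ‖u‖ ^ 2))).congr_deriv ?_
    simp only [inner_sub_left, Nat.cast_ofNat]
    ring
  have hq_nonpos : ∀ t, 0 ≤ t → ⟪g (v + t • u) - g v, u⟫ - L * ‖u‖ ^ 2 * t ≤ 0 := by
    intro t ht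
    have := calc ⟪g (v + t • u) - g v, u⟫ ≤ ‖g (v + t • u) - g v‖ * ‖u‖ := real_inner_le_norm _ _
      _ ≤ L * ‖v + t • u - v‖ * ‖u‖ := by gcongr; exact hsmooth _ _
      _ = L * ‖u‖ ^ 2 * t := by
        simp only [add_sub_cancel_left, norm_smul, Real.norm_eq_abs, abs_of_nonneg ht]; ring
    linarith
  have hanti : AntitoneOn q (Set.Ici 0) :=
    antitoneOn_of_hasDerivWithinAt_nonpos (convex_Ici 0)
      (fun t _ => (hq t).continuousAt.continuousWithinAt) (fun t _ => (hq t).hasDerivWithinAt)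
      (fun t ht => hq_nonpos t (interior_subset ht))
  have h01 := hanti Set.self_mem_Ici (Set.mem_Ici.2 zero_le_one) zero_le_one
  simp only [q, u, zero_smul, add_zero, one_smul, add_sub_cancel] at h01
  linarith

theorem sq_norm_sub_le_of_convex_of_lipschitz_gradient (hL : 0 < L)
    (hgrad : ∀ x, HasGradientAt f (g x) x) (hconv : ∀ x y, f x + ⟪g x, y - x⟫ ≤ f y)
    (hsmooth : ∀ x y, ‖g x - g y‖ ≤ L * ‖x - y‖) (z y : E) :
    ‖g y - g z‖ ^ 2 ≤ 2 * L * (f y - f z - ⟪g z, y - z⟫) := by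
  set d := g y - g z
  -- `w` is the gradient step of length `1 / L` from `y` for `f - ⟪g z, ·⟫`, a function minimised
  -- at `z`.
  set w := y - L⁻¹ • d
  have hlower := hconv z w
  have hupper := le_add_inner_add_of_lipschitz_gradient hgrad hsmooth y w
  have hwy : w - y = -(L⁻¹ • d) := by simp [w]
  have hwz : w - z = (y - z) - L⁻¹ • d := by simp only [w]; abel
  rw [hwz, inner_sub_right, real_inner_smul_right] at hlower
  rw [hwy, inner_neg_right, real_inner_smul_right, norm_neg, norm_smul, Real.norm_eq_abs,
    abs_of_pos (inv_pos.2 hL)] at hupper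
  have hd : ⟪g y, d⟫ - ⟪g z, d⟫ = ‖d‖ ^ 2 := by
    rw [← inner_sub_left, real_inner_self_eq_norm_sq]
  field_simp at hlower hupper
  nlinarith

end LipschitzGradient

theorem le_div_mul_of_mul_add_le_mul_sub {μ L a b : ℝ} (hμ : 0 < μ) (hL : 0 < L)
    (h : μ * (a + b) ≤ L * (a - b)) :
    b ≤ (L / μ - 1) / (L / μ + 1) * a := by
  have hκ : (L / μ - 1) / (L / μ + 1) = (L - μ) / (L + μ) := by
    field_simp
  rw [hκ, div_mul_eq_mul_div, le_div_iff₀ (by linarith)]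
  linarith

theorem stmt_7_general {n : ℕ} (f : EuclideanSpace ℝ (Fin n) → ℝ)
    (g : EuclideanSpace ℝ (Fin n) → EuclideanSpace ℝ (Fin n)) (μ L : ℝ)
    (hμ : 0 < μ) (hμL : μ ≤ L)
    (hgrad : ∀ x, HasGradientAt f (g x) x)
    (hsc : ∀ x y : EuclideanSpace ℝ (Fin n),
      f y ≥ f x + ⟪g x, y - x⟫ + μ / 2 * ‖y - x‖ ^ 2)
    (hsmooth : ∀ x y : EuclideanSpace ℝ (Fin n), ‖g x - g y‖ ≤ L * ‖x - y‖)
    (xs : EuclideanSpace ℝ (Fin n))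
    (x xp : EuclideanSpace ℝ (Fin n))
    (horth1 : ⟪g xp, xp - x⟫ = 0) (horth2 : ⟪g xp, g x⟫ = 0) :
    f xp - f xs ≤ (L / μ - 1) / (L / μ + 1) * (f x - f xs) := by
  have hL : 0 < L := hμ.trans_le hμL
  have hconv : ∀ u v, f u + ⟪g u, v - u⟫ ≤ f v := fun u v => by
    nlinarith [hsc u v, sq_nonneg ‖v - u‖]
  have hstep := sq_norm_sub_le_of_convex_of_lipschitz_gradient hL hgrad hconv hsmooth xp x
  have hpyth : ‖g x - g xp‖ ^ 2 = ‖g x‖ ^ 2 + ‖g xp‖ ^ 2 := by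
    rw [real_inner_comm] at horth2
    simpa only [sq] using norm_sub_sq_eq_norm_sq_add_norm_sq_real horth2
  have horth1' : ⟪g xp, x - xp⟫ = 0 := by rw [← neg_sub, inner_neg_right, horth1, neg_zero]
  rw [hpyth, horth1'] at hstep
  have hPLx := polyakLojasiewicz_of_strongConvex hμ hsc x xs
  have hPLxp := polyakLojasiewicz_of_strongConvex hμ hsc xp xs
  exact le_div_mul_of_mul_add_le_mul_sub hμ hL (by linarith)

/-- Improved contraction rate (κ-1)/(κ+1) under double orthogonality, κ = L/μ. -/
theorem stmt_7 {n : ℕ} (f : EuclideanSpace ℝ (Fin n) → ℝ)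
    (g : EuclideanSpace ℝ (Fin n) → EuclideanSpace ℝ (Fin n)) (μ L : ℝ)
    (hμ : 0 < μ) (hμL : μ ≤ L)
    (hgrad : ∀ x, HasGradientAt f (g x) x)
    (hsc : ∀ x y : EuclideanSpace ℝ (Fin n),
      f y ≥ f x + ⟪g x, y - x⟫ + μ / 2 * ‖y - x‖ ^ 2)
    (hsmooth : ∀ x y : EuclideanSpace ℝ (Fin n), ‖g x - g y‖ ≤ L * ‖x - y‖)
    (xs : EuclideanSpace ℝ (Fin n)) (hmin : ∀ y, f xs ≤ f y)
    (x xp : EuclideanSpace ℝ (Fin n))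
    (horth1 : ⟪g xp, xp - x⟫ = 0) (horth2 : ⟪g xp, g x⟫ = 0)
    (hdec : f xp ≤ f x) :
    f xp - f xs ≤ (L / μ - 1) / (L / μ + 1) * (f x - f xs) :=
  stmt_7_general f g μ L hμ hμL hgrad hsc hsmooth xs x xp horth1 horth2
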